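/- arXiv:1009.0058 — 6 statements merged into one kernel-verified Lean document; each statement's English description precedes it below -/
import Mathlib

section
/- Let u : [a, b] → ℝ be continuously differentiable and satisfy (1/2)·d/dx(u(x)²) ≤ -α·u(x)² + k·|u(x)| on [a,b], where α > 0, k ≥ 0. If |u(a)| ≤ μ where μ = max(|u(a)|, k/α), then |u(x)| ≤ μ for all x ∈ [a, b]. -/
/-!
The square `v = u²` satisfies `v' / 2 ≤ |u| (k - α |u|)`, which is negative as soon as
`|u| > k / α`. So `v` strictly decreases whenever it exceeds `μ² ≥ (k / α)²`, and, starting at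
`v a ≤ μ²`, it can never climb above `μ²`.
-/

open Set

theorem image_le_of_deriv_right_neg_of_lt {f f' : ℝ → ℝ} {a b M : ℝ}
    (hf : ContinuousOn f (Icc a b)) (hf' : ∀ x ∈ Ico a b, HasDerivWithinAt f (f' x) (Ici x) x)
    (ha : f a ≤ M) (hneg : ∀ x ∈ Ico a b, M < f x → f' x < 0) :
    ∀ ⦃x⦄, x ∈ Icc a b → f x ≤ M := by
  intro x hx
  refine le_of_forall_pos_le_add fun ε hε => ?_
  -- The strict barrier `M + ε` can only be touched where `f > M`, i.e. where `f' < 0`.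
  refine image_le_of_deriv_right_lt_deriv_boundary' hf hf' (B := fun _ => M + ε) (B' := 0)
    (by linarith) continuousOn_const (fun y _ => hasDerivWithinAt_const y _ _) ?_ hx
  intro y hy hcontact
  exact hneg y hy (by linarith)

theorem neg_mul_sq_add_mul_abs_neg {α k y : ℝ} (hα : 0 < α) (hk : 0 ≤ k) (hy : k / α < |y|) :
    -α * y ^ 2 + k * |y| < 0 := by
  have hy₀ : 0 < |y| := (div_nonneg hk hα.le).trans_lt hy
  have hky : k < α * |y| := (div_lt_iff₀' hα).mp hy
  calc -α * y ^ 2 + k * |y| = |y| * (k - α * |y|) := by rw [← sq_abs]; ring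
    _ < 0 := mul_neg_of_pos_of_neg hy₀ (by linarith)

theorem stmt_2_general (a b α k μ : ℝ) (hα : 0 < α) (hk : 0 ≤ k)
    (u : ℝ → ℝ) (hu : ContDiffOn ℝ 1 u (Set.Icc a b))
    (hineq : ∀ x ∈ Set.Icc a b,
      derivWithin (fun t => (u t) ^ 2) (Set.Icc a b) x / 2 ≤ -α * (u x) ^ 2 + k * |u x|)
    (hμ : μ = max |u a| (k / α)) :
    ∀ x ∈ Set.Icc a b, |u x| ≤ μ := by
  have hua : |u a| ≤ μ := hμ ▸ le_max_left _ _
  have hkμ : k / α ≤ μ := hμ ▸ le_max_right _ _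
  have hμ₀ : 0 ≤ μ := (abs_nonneg _).trans hua
  have hsq : DifferentiableOn ℝ (fun t => u t ^ 2) (Icc a b) :=
    (hu.differentiableOn one_ne_zero).pow 2
  have hsq_le : ∀ x ∈ Icc a b, u x ^ 2 ≤ μ ^ 2 := by
    refine image_le_of_deriv_right_neg_of_lt hsq.continuousOn
      (fun x hx => ((hsq x (Ico_subset_Icc_self hx)).hasDerivWithinAt).mono_of_mem_nhdsWithin
        (Icc_mem_nhdsGE_of_mem hx)) (by rw [← sq_abs]; gcongr) fun x hx hμx => ?_
    have hx' : μ < |u x| := (sq_lt_sq₀ hμ₀ (abs_nonneg _)).mp (by rwa [sq_abs])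
    have hderiv := hineq x (Ico_subset_Icc_self hx)
    linarith [neg_mul_sq_add_mul_abs_neg hα hk (hkμ.trans_lt hx')]
  exact fun x hx => abs_le_of_sq_le_sq (hsq_le x hx) hμ₀

theorem stmt_2 (a b α k μ : ℝ) (hab : a < b) (hα : 0 < α) (hk : 0 ≤ k)
    (u : ℝ → ℝ) (hu : ContDiffOn ℝ 1 u (Set.Icc a b))
    (hineq : ∀ x ∈ Set.Icc a b,
      derivWithin (fun t => (u t) ^ 2) (Set.Icc a b) x / 2 ≤ -α * (u x) ^ 2 + k * |u x|)
    (hμ : μ = max |u a| (k / α)) :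
    ∀ x ∈ Set.Icc a b, |u x| ≤ μ :=
  stmt_2_general a b α k μ hα hk u hu hineq hμ
end

section
/- Consider the piecewise-linear Cauchy problem u'(x) = N(x, u(x_{i-1}))·u(x) + φ(x) on each interval [x_{i-1}, x_i] of a grid x0 < x1 < x2 < ⋯ → ∞, with u(x0) = u0 and u continuous across grid points, where N(x,v) ≤ -α < 0 for all x, v and |φ(x)| ≤ k. Then the solution u exists on [x0, ∞) and satisfies |u(x)| ≤ max(|u0|, k/α) for all x ≥ x0. -/
/-!
On each grid cell the coefficient is frozen, so the equation is linear there and is solved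
explicitly by variation of constants; gluing these pieces at the grid points gives a continuous
solution on `[x0, ∞)`, because the cells are locally finite.

For the bound, put `M = max |u0| (k / α)`. The freezing plays no role: at any point where the
glued solution equals `M + ε`, its right derivative is at most `-α (M + ε) + k < 0`, so by the
fencing theorem it never exceeds `M + ε`; letting `ε → 0` and applying the same argument to `-u`
gives `|u| ≤ M`.
-/

open Set Filter Topology

theorem hasDerivWithinAt_integral_Ici {g : ℝ → ℝ} {a t : ℝ} (hg : ContinuousOn g (Ici a))
    (ht : t ∈ Ici a) : HasDerivWithinAt (fun u => ∫ s in a..u, g s) (g t) (Ici a) t := by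
  have hint : IntervalIntegrable g MeasureTheory.volume a t :=
    (hg.mono (uIcc_of_le (mem_Ici.1 ht) ▸ Icc_subset_Ici_self)).intervalIntegrable
  rcases (mem_Ici.1 ht).eq_or_lt with rfl | hlt
  · have hg' := hg.mono Ioi_subset_Ici_self
    exact intervalIntegral.integral_hasDerivWithinAt_right hint
      (hg'.stronglyMeasurableAtFilter_nhdsWithin measurableSet_Ioi a)
      ((hg a self_mem_Ici).mono Ioi_subset_Ici_self)
  · exact (intervalIntegral.integral_hasDerivAt_right hint
      ((hg.mono Ioi_subset_Ici_self).stronglyMeasurableAtFilter isOpen_Ioi t hlt)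
      (hg.continuousAt (Ici_mem_nhds hlt))).hasDerivWithinAt

noncomputable def linearSol (n f : ℝ → ℝ) (a w t : ℝ) : ℝ :=
  Real.exp (∫ s in a..t, n s) *
    (w + ∫ s in a..t, Real.exp (-∫ r in a..s, n r) * f s)

theorem linearSol_self (n f : ℝ → ℝ) (a w : ℝ) : linearSol n f a w a = w := by
  simp [linearSol]

theorem hasDerivWithinAt_linearSol {n f : ℝ → ℝ} {a t : ℝ} (hn : ContinuousOn n (Ici a))
    (hf : ContinuousOn f (Ici a)) (w : ℝ) (ht : t ∈ Ici a) :
    HasDerivWithinAt (linearSol n f a w) (n t * linearSol n f a w t + f t) (Ici a) t := by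
  set G := fun u => ∫ s in a..u, n s
  have hG : ∀ u ∈ Ici a, HasDerivWithinAt G (n u) (Ici a) u :=
    fun u hu => hasDerivWithinAt_integral_Ici hn hu
  have hGc : ContinuousOn G (Ici a) := fun u hu => (hG u hu).continuousWithinAt
  have hF : HasDerivWithinAt (fun u => ∫ s in a..u, Real.exp (-G s) * f s)
      (Real.exp (-G t) * f t) (Ici a) t :=
    hasDerivWithinAt_integral_Ici ((Real.continuous_exp.comp_continuousOn hGc.neg).mul hf) ht
  have hsol : HasDerivWithinAt (linearSol n f a w) (Real.exp (G t) * n t *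
      (w + ∫ s in a..t, Real.exp (-G s) * f s) + Real.exp (G t) * (Real.exp (-G t) * f t))
      (Ici a) t :=
    (hG t ht).exp.mul (hF.const_add w)
  convert hsol using 1
  have hexp : Real.exp (G t) * Real.exp (-G t) = 1 := by rw [← Real.exp_add]; simp
  rw [linearSol]
  linear_combination (-(f t)) * hexp

theorem le_of_hasDerivWithinAt_linear {y n f : ℝ → ℝ} {a α k M : ℝ} (hα : 0 < α)
    (hy : ContinuousOn y (Ici a))
    (hy' : ∀ t ∈ Ici a, HasDerivWithinAt y (n t * y t + f t) (Ici t) t)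
    (hn : ∀ t ∈ Ici a, n t ≤ -α) (hf : ∀ t ∈ Ici a, f t ≤ k) (hM : k / α ≤ M)
    (ha : y a ≤ M) (hM0 : 0 ≤ M) {t : ℝ} (ht : t ∈ Ici a) : y t ≤ M := by
  have hkM : k ≤ α * M := by rwa [div_le_iff₀' hα] at hM
  refine le_of_forall_pos_le_add fun ε hε => ?_
  refine image_le_of_deriv_right_lt_deriv_boundary (hy.mono Icc_subset_Ici_self)
    (fun s hs => hy' s hs.1) (B' := fun _ => 0) (by linarith) (fun _ => hasDerivAt_const _ _)
    (fun s hs hys => ?_) ⟨ht, le_rfl⟩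
  rw [hys]
  show n s * (M + ε) + f s < 0
  nlinarith [hn s hs.1, hf s hs.1]

theorem abs_le_of_hasDerivWithinAt_linear {y n f : ℝ → ℝ} {a α k M : ℝ} (hα : 0 < α)
    (hy : ContinuousOn y (Ici a))
    (hy' : ∀ t ∈ Ici a, HasDerivWithinAt y (n t * y t + f t) (Ici t) t)
    (hn : ∀ t ∈ Ici a, n t ≤ -α) (hf : ∀ t ∈ Ici a, |f t| ≤ k) (hM : k / α ≤ M)
    (ha : |y a| ≤ M) {t : ℝ} (ht : t ∈ Ici a) : |y t| ≤ M := by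
  have hM0 : 0 ≤ M := (abs_nonneg _).trans ha
  refine abs_le.2 ⟨?_, ?_⟩
  · have := le_of_hasDerivWithinAt_linear (y := -y) (f := -f) hα hy.neg
      (fun s hs => (hy' s hs).neg.congr_deriv (by simp only [Pi.neg_apply]; ring)) hn
      (fun s hs => (neg_le_abs _).trans (hf s hs)) hM ((neg_le_abs _).trans ha) hM0 ht
    simp only [Pi.neg_apply] at this
    linarith
  · exact le_of_hasDerivWithinAt_linear hα hy hy' hn
      (fun s hs => (le_abs_self _).trans (hf s hs)) hM ((le_abs_self _).trans ha) hM0 ht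

theorem exists_mem_Ico_of_tendsto_atTop {α : Type*} [LinearOrder α] [NoMaxOrder α]
    {x : ℕ → α} (hx : Tendsto x atTop atTop) {t : α} (ht : x 0 ≤ t) :
    ∃ i, t ∈ Ico (x i) (x (i + 1)) := by
  classical
  have hex : ∃ n, t < x n := (hx.eventually_gt_atTop t).exists
  obtain ⟨i, hi⟩ := Nat.exists_eq_succ_of_ne_zero fun h0 : Nat.find hex = 0 =>
    (Nat.find_spec hex).not_ge (h0 ▸ ht)
  refine ⟨i, not_lt.1 (Nat.find_min hex (by omega)), ?_⟩
  rw [← Nat.succ_eq_add_one, ← hi]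
  exact Nat.find_spec hex

theorem locallyFinite_Icc_succ_of_tendsto {α : Type*} [TopologicalSpace α] [LinearOrder α]
    [OrderTopology α] [NoMaxOrder α] {x : ℕ → α} (hmono : Monotone x)
    (hx : Tendsto x atTop atTop) : LocallyFinite fun i => Icc (x i) (x (i + 1)) := by
  intro t
  obtain ⟨n, hn⟩ := (hx.eventually_gt_atTop t).exists
  refine ⟨Iio (x n), Iio_mem_nhds hn, (finite_Iio n).subset ?_⟩
  rintro i ⟨s, ⟨his, -⟩, hsn⟩
  exact hmono.reflect_lt (his.trans_lt hsn)

noncomputable def gridIndex {α : Type*} [LinearOrder α] (x : ℕ → α) (t : α) : ℕ :=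
  sSup {i | x i ≤ t}

theorem gridIndex_eq {α : Type*} [LinearOrder α] {x : ℕ → α} (hx : StrictMono x) {i : ℕ}
    {t : α} (ht : t ∈ Ico (x i) (x (i + 1))) : gridIndex x t = i := by
  have : {j | x j ≤ t} = Iic i := by
    ext j
    refine ⟨fun hj => ?_, fun hj => (hx.monotone hj).trans ht.1⟩
    exact Nat.lt_succ_iff.1 (hx.lt_iff_lt.1 (hj.trans_lt ht.2))
  rw [gridIndex, this, csSup_Iic]

section Frozen

variable (N : ℝ → ℝ → ℝ) (φ : ℝ → ℝ) (x : ℕ → ℝ) (u0 : ℝ)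

noncomputable def frozenNode : ℕ → ℝ
  | 0 => u0
  | i + 1 => linearSol (N · (frozenNode i)) φ (x i) (frozenNode i) (x (i + 1))

noncomputable def frozenPiece (i : ℕ) : ℝ → ℝ :=
  linearSol (N · (frozenNode N φ x u0 i)) φ (x i) (frozenNode N φ x u0 i)

noncomputable def frozenSol (t : ℝ) : ℝ :=
  frozenPiece N φ x u0 (gridIndex x t) t

variable {N φ x u0}

theorem frozenSol_eqOn (hx : StrictMono x) (i : ℕ) :
    EqOn (frozenSol N φ x u0) (frozenPiece N φ x u0 i) (Icc (x i) (x (i + 1))) := by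
  intro t ht
  rcases ht.2.lt_or_eq with hlt | rfl
  · rw [frozenSol, gridIndex_eq hx ⟨ht.1, hlt⟩]
  · rw [frozenSol, gridIndex_eq hx ⟨le_rfl, hx (Nat.lt_succ_self _)⟩, frozenPiece,
      linearSol_self]
    rfl

theorem frozenSol_node (hx : StrictMono x) (i : ℕ) :
    frozenSol N φ x u0 (x i) = frozenNode N φ x u0 i := by
  rw [frozenSol_eqOn hx i ⟨le_rfl, (hx (Nat.lt_succ_self i)).le⟩, frozenPiece, linearSol_self]

theorem hasDerivWithinAt_frozenPiece (hx : Monotone x)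
    (hNcont : ∀ v : ℝ, ContinuousOn (fun t => N t v) (Ici (x 0)))
    (hφcont : ContinuousOn φ (Ici (x 0))) (i : ℕ) {t : ℝ} (ht : t ∈ Ici (x i)) :
    HasDerivWithinAt (frozenPiece N φ x u0 i)
      (N t (frozenNode N φ x u0 i) * frozenPiece N φ x u0 i t + φ t) (Ici (x i)) t :=
  have hsub : Ici (x i) ⊆ Ici (x 0) := Ici_subset_Ici.2 (hx (Nat.zero_le i))
  hasDerivWithinAt_linearSol ((hNcont _).mono hsub) (hφcont.mono hsub) _ ht

theorem continuousOn_frozenSol (hx : StrictMono x) (hxtop : Tendsto x atTop atTop)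
    (hNcont : ∀ v : ℝ, ContinuousOn (fun t => N t v) (Ici (x 0)))
    (hφcont : ContinuousOn φ (Ici (x 0))) : ContinuousOn (frozenSol N φ x u0) (Ici (x 0)) := by
  have hpiece (i : ℕ) : ContinuousOn (frozenSol N φ x u0) (Icc (x i) (x (i + 1))) :=
    ContinuousOn.congr (fun t ht => (hasDerivWithinAt_frozenPiece hx.monotone hNcont hφcont i
      ht.1).continuousWithinAt.mono Icc_subset_Ici_self) (frozenSol_eqOn hx i)
  refine ((locallyFinite_Icc_succ_of_tendsto hx.monotone hxtop).continuousOn_iUnion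
    (fun _ => isClosed_Icc) hpiece).mono fun t ht => ?_
  obtain ⟨i, hi⟩ := exists_mem_Ico_of_tendsto_atTop hxtop ht
  exact mem_iUnion.2 ⟨i, Ico_subset_Icc_self hi⟩

theorem hasDerivWithinAt_frozenSol (hx : StrictMono x) (hxtop : Tendsto x atTop atTop)
    (hNcont : ∀ v : ℝ, ContinuousOn (fun t => N t v) (Ici (x 0)))
    (hφcont : ContinuousOn φ (Ici (x 0))) {t : ℝ} (ht : t ∈ Ici (x 0)) :
    HasDerivWithinAt (frozenSol N φ x u0)
      (N t (frozenNode N φ x u0 (gridIndex x t)) * frozenSol N φ x u0 t + φ t) (Ici t) t := by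
  obtain ⟨i, hi⟩ := exists_mem_Ico_of_tendsto_atTop hxtop ht
  have heq : frozenSol N φ x u0 =ᶠ[𝓝[Ici t] t] frozenPiece N φ x u0 i :=
    mem_of_superset (Ico_mem_nhdsGE hi.2) fun s hs =>
      frozenSol_eqOn hx i ⟨hi.1.trans hs.1, hs.2.le⟩
  rw [gridIndex_eq hx hi, frozenSol_eqOn hx i (Ico_subset_Icc_self hi)]
  exact ((hasDerivWithinAt_frozenPiece hx.monotone hNcont hφcont i hi.1).mono
    (Ici_subset_Ici.2 hi.1)).congr_of_eventuallyEq heq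
    (frozenSol_eqOn hx i (Ico_subset_Icc_self hi))

theorem hasDerivAt_frozenSol (hx : StrictMono x)
    (hNcont : ∀ v : ℝ, ContinuousOn (fun t => N t v) (Ici (x 0)))
    (hφcont : ContinuousOn φ (Ici (x 0))) {i : ℕ} {t : ℝ} (ht : t ∈ Ioo (x i) (x (i + 1))) :
    HasDerivAt (frozenSol N φ x u0)
      (N t (frozenSol N φ x u0 (x i)) * frozenSol N φ x u0 t + φ t) t := by
  have heq : frozenSol N φ x u0 =ᶠ[𝓝 t] frozenPiece N φ x u0 i :=
    mem_of_superset (Ioo_mem_nhds ht.1 ht.2) fun s hs =>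
      frozenSol_eqOn hx i (Ioo_subset_Icc_self hs)
  rw [frozenSol_node hx i, frozenSol_eqOn hx i (Ioo_subset_Icc_self ht)]
  exact ((hasDerivWithinAt_frozenPiece hx.monotone hNcont hφcont i ht.1.le).hasDerivAt
    (Ici_mem_nhds ht.1)).congr_of_eventuallyEq heq

end Frozen

theorem stmt_3_general (x0 α k u0 : ℝ) (hα : 0 < α)
    (N : ℝ → ℝ → ℝ) (φ : ℝ → ℝ)
    (x : ℕ → ℝ) (hx0 : x 0 = x0) (hmono : StrictMono x)
    (hxtop : Filter.Tendsto x Filter.atTop Filter.atTop)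
    (hNcont : ∀ v : ℝ, ContinuousOn (fun t => N t v) (Set.Ici x0))
    (hN : ∀ t ∈ Set.Ici x0, ∀ v : ℝ, N t v ≤ -α)
    (hφcont : ContinuousOn φ (Set.Ici x0))
    (hφ : ∀ t ∈ Set.Ici x0, |φ t| ≤ k) :
    ∃ u : ℝ → ℝ, ContinuousOn u (Set.Ici x0) ∧ u x0 = u0 ∧
      (∀ i : ℕ, ∀ t ∈ Set.Ioo (x i) (x (i + 1)),
        HasDerivAt u (N t (u (x i)) * u t + φ t) t) ∧
      (∀ t ∈ Set.Ici x0, |u t| ≤ max |u0| (k / α)) := by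
  subst hx0
  have hcont := continuousOn_frozenSol (u0 := u0) hmono hxtop hNcont hφcont
  have hinit : frozenSol N φ x u0 (x 0) = u0 := frozenSol_node hmono 0
  refine ⟨frozenSol N φ x u0, hcont, hinit,
    fun i t ht => hasDerivAt_frozenSol hmono hNcont hφcont ht, fun t ht => ?_⟩
  exact abs_le_of_hasDerivWithinAt_linear hα hcont
    (fun s hs => hasDerivWithinAt_frozenSol hmono hxtop hNcont hφcont hs)
    (fun s hs => hN s hs _) hφ (le_max_right _ _) (by rw [hinit]; exact le_max_left _ _) ht

theorem stmt_3 (x0 α k u0 : ℝ) (hα : 0 < α) (hk : 0 ≤ k)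
    (N : ℝ → ℝ → ℝ) (φ : ℝ → ℝ)
    (x : ℕ → ℝ) (hx0 : x 0 = x0) (hmono : StrictMono x)
    (hxtop : Filter.Tendsto x Filter.atTop Filter.atTop)
    (hNcont : ∀ v : ℝ, ContinuousOn (fun t => N t v) (Set.Ici x0))
    (hN : ∀ t ∈ Set.Ici x0, ∀ v : ℝ, N t v ≤ -α)
    (hφcont : ContinuousOn φ (Set.Ici x0))
    (hφ : ∀ t ∈ Set.Ici x0, |φ t| ≤ k) :
    ∃ u : ℝ → ℝ, ContinuousOn u (Set.Ici x0) ∧ u x0 = u0 ∧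
      (∀ i : ℕ, ∀ t ∈ Set.Ioo (x i) (x (i + 1)),
        HasDerivAt u (N t (u (x i)) * u t + φ t) t) ∧
      (∀ t ∈ Set.Ici x0, |u t| ≤ max |u0| (k / α)) :=
  stmt_3_general x0 α k u0 hα N φ x hx0 hmono hxtop hNcont hN hφcont hφ
end

section
/- Let N : ℝ → ℝ be smooth, and define the Adomian polynomials A_k(N; u0, ..., uk) = (1/k!)·d^k/dt^k [ N(∑_{i≥0} t^i u_i) ] at t = 0. Then for smooth N and any V_0, V_1, ..., V_j ∈ ℝ and j ≥ 0: A_{j+1}(N; V_0, V_1, ..., V_j, 0) = (1/(j+1)!)·d^{j+1}/dz^{j+1} [ N(f(z)) − (f(z) − V_0)·N'(V_0) ] at z = 0, where f(z) = ∑_{i=0}^{j} z^i V_i. -/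
open Polynomial

lemma iterDeriv_poly_eval (p : ℝ[X]) (n : ℕ) :
    iteratedDeriv n (fun x => p.eval x) = fun x => (Polynomial.derivative^[n] p).eval x := by
  induction n with
  | zero => simp
  | succ n ih =>
      rw [iteratedDeriv_succ, ih, Function.iterate_succ_apply']
      funext x
      simp [Polynomial.deriv]

lemma iterDeriv_sub {n : ℕ} {f g : ℝ → ℝ} (hf : ContDiff ℝ n f) (hg : ContDiff ℝ n g)
    (x : ℝ) :
    iteratedDeriv n (fun z => f z - g z) x = iteratedDeriv n f x - iteratedDeriv n g x := by
  simp only [← iteratedDerivWithin_univ]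
  exact iteratedDerivWithin_sub (Set.mem_univ x) uniqueDiffOn_univ
    hf.contDiffWithinAt hg.contDiffWithinAt

/-- The `k`-th Adomian polynomial of `N` with arguments `u 0, …, u k`. -/
noncomputable def adomian (N : ℝ → ℝ) (k : ℕ) (u : ℕ → ℝ) : ℝ :=
  (1 / (Nat.factorial k : ℝ)) *
    iteratedDeriv k (fun t : ℝ => N (∑ i ∈ Finset.range (k + 1), t ^ i * u i)) 0

theorem stmt_7 (N : ℝ → ℝ) (hN : ContDiff ℝ (⊤ : ℕ∞) N) (j : ℕ) (V : ℕ → ℝ) :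
    adomian N (j + 1) (Function.update V (j + 1) 0) =
      (1 / (Nat.factorial (j + 1) : ℝ)) *
        iteratedDeriv (j + 1)
          (fun z : ℝ =>
            N (∑ i ∈ Finset.range (j + 1), z ^ i * V i) -
              ((∑ i ∈ Finset.range (j + 1), z ^ i * V i) - V 0) * deriv N (V 0)) 0 := by
  set c := deriv N (V 0) with hc
  set f : ℝ → ℝ := fun z => ∑ i ∈ Finset.range (j + 1), z ^ i * V i with hf
  have hfc : ContDiff ℝ (⊤ : ℕ∞) f := by
    apply ContDiff.sum
    intro i _
    exact (contDiff_id.pow i).mul contDiff_const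
  have hNf : ContDiff ℝ (⊤ : ℕ∞) (fun z => N (f z)) := hN.comp hfc
  have hgc : ContDiff ℝ (⊤ : ℕ∞) (fun z => (f z - V 0) * c) :=
    ((hfc.sub contDiff_const).mul contDiff_const)
  -- the inner sum of the adomian polynomial coincides with f
  have hsum : (fun t : ℝ => N (∑ i ∈ Finset.range (j + 1 + 1),
      t ^ i * Function.update V (j + 1) 0 i)) = fun t => N (f t) := by
    funext t
    congr 1
    rw [Finset.sum_range_succ, Function.update_self]
    simp only [mul_zero, add_zero, hf]
    refine Finset.sum_congr rfl fun i hi => ?_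
    have := Finset.mem_range.mp hi
    rw [Function.update_of_ne (by omega : i ≠ j + 1)]
  -- the polynomial part has vanishing (j+1)-st derivative
  have hpoly : iteratedDeriv (j + 1) (fun z => (f z - V 0) * c) 0 = 0 := by
    set p : ℝ[X] := ((∑ i ∈ Finset.range (j + 1), Polynomial.C (V i) * X ^ i)
      - Polynomial.C (V 0)) * Polynomial.C c with hp
    have heval : (fun z : ℝ => (f z - V 0) * c) = fun z => p.eval z := by
      funext z
      simp only [hp, Polynomial.eval_mul, Polynomial.eval_sub, Polynomial.eval_finset_sum,
        Polynomial.eval_C, Polynomial.eval_pow, Polynomial.eval_X, hf]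
      rw [Finset.sum_congr rfl fun i _ => mul_comm (z ^ i) (V i)]
    have hdeg : p.natDegree < j + 1 := by
      have h1 : (∑ i ∈ Finset.range (j + 1), Polynomial.C (V i) * X ^ i).natDegree ≤ j := by
        apply Polynomial.natDegree_sum_le_of_forall_le
        intro i hi
        calc (Polynomial.C (V i) * X ^ i).natDegree ≤ (X ^ i : ℝ[X]).natDegree :=
              Polynomial.natDegree_C_mul_le _ _
          _ ≤ i := Polynomial.natDegree_X_pow_le i
          _ ≤ j := by simpa using Nat.lt_succ_iff.mp (Finset.mem_range.mp hi)
      have h2 : p.natDegree ≤ j := by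
        refine le_trans Polynomial.natDegree_mul_le ?_
        simp only [Polynomial.natDegree_C, add_zero]
        exact le_trans (Polynomial.natDegree_sub_le _ _) (max_le h1 (by simp))
      omega
    rw [heval, iterDeriv_poly_eval, Polynomial.iterate_derivative_eq_zero hdeg]
    simp
  have hmain : iteratedDeriv (j + 1)
      (fun z : ℝ => N (f z) - (f z - V 0) * c) 0 =
      iteratedDeriv (j + 1) (fun z => N (f z)) 0 := by
    rw [iterDeriv_sub (hNf.of_le (by exact_mod_cast le_top)) (hgc.of_le (by exact_mod_cast le_top)) 0, hpoly, sub_zero]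
  show (1 / (Nat.factorial (j + 1) : ℝ)) *
      iteratedDeriv (j + 1) (fun t : ℝ => N (∑ i ∈ Finset.range (j + 1 + 1),
        t ^ i * Function.update V (j + 1) 0 i)) 0 = _
  rw [hsum, ← hmain]
end

section
/- The Adomian polynomial A_k is linear in its top argument in the following sense: A_{j+1}(N; V_0, ..., V_j, V_{j+1}) = A_{j+1}(N; V_0, ..., V_j, 0) + V_{j+1}·N'(V_0) for any smooth N : ℝ → ℝ and reals V_0, ..., V_{j+1}. -/
open Function


lemma inftop : ((⊤ : ℕ∞) : WithTop ℕ∞) + 1 ≤ ((⊤ : ℕ∞) : WithTop ℕ∞) := by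
  norm_num

noncomputable def d1 (F : ℝ × ℝ → ℝ) : ℝ × ℝ → ℝ := fun p => fderiv ℝ F p (1, 0)
noncomputable def d2 (F : ℝ × ℝ → ℝ) : ℝ × ℝ → ℝ := fun p => fderiv ℝ F p (0, 1)

lemma contDiff_d1 {F : ℝ × ℝ → ℝ} (hF : ContDiff ℝ (⊤ : ℕ∞) F) :
    ContDiff ℝ (⊤ : ℕ∞) (d1 F) :=
  (hF.fderiv_right inftop).clm_apply contDiff_const

lemma contDiff_d2 {F : ℝ × ℝ → ℝ} (hF : ContDiff ℝ (⊤ : ℕ∞) F) :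
    ContDiff ℝ (⊤ : ℕ∞) (d2 F) :=
  (hF.fderiv_right inftop).clm_apply contDiff_const

lemma deriv_comp_pair {F : ℝ × ℝ → ℝ} (hF : ContDiff ℝ (⊤ : ℕ∞) F)
    {w : ℝ → ℝ} (hw : Differentiable ℝ w) :
    deriv (fun t => F (t, w t)) = fun t => d1 F (t, w t) + deriv w t * d2 F (t, w t) := by
  funext t
  have hγ : HasDerivAt (fun t : ℝ => (t, w t)) (1, deriv w t) t :=
    HasDerivAt.prodMk (hasDerivAt_id t) (hw t).hasDerivAt
  have hFd : HasFDerivAt F (fderiv ℝ F (t, w t)) (t, w t) :=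
    (hF.differentiable (by norm_num)).differentiableAt.hasFDerivAt
  have h := hFd.comp_hasDerivAt t hγ
  simp only [Function.comp_def] at h
  rw [h.deriv]
  have : ((1 : ℝ), deriv w t) = (1, 0) + deriv w t • ((0 : ℝ), (1 : ℝ)) := by
    simp
  rw [this, map_add, map_smul]
  simp [d1, d2, smul_eq_mul]

lemma iteratedDeriv_add'' {n : ℕ} {f g : ℝ → ℝ} (hf : ContDiff ℝ (⊤ : ℕ∞) f)
    (hg : ContDiff ℝ (⊤ : ℕ∞) g) (x : ℝ) :
    iteratedDeriv n (fun t => f t + g t) x = iteratedDeriv n f x + iteratedDeriv n g x := by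
  rw [← iteratedDerivWithin_univ, ← iteratedDerivWithin_univ, ← iteratedDerivWithin_univ]
  exact iteratedDerivWithin_add (Set.mem_univ x) uniqueDiffOn_univ
    ((hf.of_le (by exact_mod_cast le_top)).contDiffWithinAt)
    ((hg.of_le (by exact_mod_cast le_top)).contDiffWithinAt)

lemma lemP : ∀ (n : ℕ) (S : ℝ → ℝ), ContDiff ℝ (⊤ : ℕ∞) S →
    iteratedDeriv n (fun t => t ^ n * S t) 0 = (n.factorial : ℝ) * S 0 := by
  intro n
  induction n with
  | zero => intro S hS; simp
  | succ n ih =>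
    intro S hS
    have hS' : ContDiff ℝ (⊤ : ℕ∞) (deriv S) := (contDiff_infty_iff_deriv.mp hS).2
    have hdiff : Differentiable ℝ S := hS.differentiable (by norm_num)
    have hder : deriv (fun t => t ^ (n + 1) * S t)
        = fun t => t ^ n * (((n : ℝ) + 1) * S t + t * deriv S t) := by
      funext t
      rw [deriv_fun_mul (differentiableAt_pow _) (hdiff t)]
      rw [deriv_pow_field]
      push_cast [Nat.add_sub_cancel]
      ring
    rw [iteratedDeriv_succ', hder, ih _ (by
      exact (contDiff_const.mul hS).add (contDiff_id.mul hS'))]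
    simp [Nat.factorial_succ]
    ring

lemma deriv_pow_mul (m : ℕ) {s : ℝ → ℝ} (hs : Differentiable ℝ s) :
    deriv (fun t : ℝ => t ^ (m + 1) * s t)
      = fun t => t ^ m * (((m : ℝ) + 1) * s t + t * deriv s t) := by
  funext t
  rw [deriv_fun_mul (differentiableAt_pow _) (hs t), deriv_pow_field]
  push_cast [Nat.add_sub_cancel]
  ring

lemma lemZ : ∀ (n : ℕ) (F : ℝ × ℝ → ℝ) (s : ℝ → ℝ), ContDiff ℝ (⊤ : ℕ∞) F →
    ContDiff ℝ (⊤ : ℕ∞) s →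
    iteratedDeriv n (fun t => F (t, t ^ (n + 1) * s t)) 0
      = iteratedDeriv n (fun t => F (t, 0)) 0 := by
  intro n
  induction n with
  | zero => intro F s hF hs; simp
  | succ n ih =>
    intro F s hF hs
    have hs' : ContDiff ℝ (⊤ : ℕ∞) (deriv s) := (contDiff_infty_iff_deriv.mp hs).2
    have hw : ContDiff ℝ (⊤ : ℕ∞) (fun t : ℝ => t ^ (n + 2) * s t) :=
      (contDiff_id.pow _).mul hs
    set σ : ℝ → ℝ :=
      fun t => (((n : ℝ) + 1 + 1) * s t + t * deriv s t) * d2 F (t, t ^ (n + 2) * s t) with hσdef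
    have hσ : ContDiff ℝ (⊤ : ℕ∞) σ :=
      ((contDiff_const.mul hs).add (contDiff_id.mul hs')).mul
        ((contDiff_d2 hF).comp (contDiff_id.prodMk hw))
    have hA : ContDiff ℝ (⊤ : ℕ∞) (fun t : ℝ => d1 F (t, t ^ (n + 2) * s t)) :=
      (contDiff_d1 hF).comp (contDiff_id.prodMk hw)
    have e1 : deriv (fun t : ℝ => F (t, t ^ (n + 2) * s t))
        = fun t => d1 F (t, t ^ (n + 2) * s t) + t ^ (n + 1) * σ t := by
      rw [deriv_comp_pair hF (hw.differentiable (by norm_num))]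
      funext t
      rw [deriv_pow_mul (n + 1) (hs.differentiable (by norm_num))]
      push_cast
      ring
    have e2 : deriv (fun t : ℝ => F (t, 0))
        = fun t => d1 F (t, 0) := by
      rw [deriv_comp_pair hF (differentiable_const (0 : ℝ))]
      funext t
      simp
    rw [iteratedDeriv_succ', iteratedDeriv_succ', e1, e2,
      iteratedDeriv_add'' hA (show ContDiff ℝ (⊤ : ℕ∞) (fun t : ℝ => t ^ (n + 1) * σ t) from (contDiff_id.pow _).mul hσ) 0]
    have eA : (fun t : ℝ => d1 F (t, t ^ (n + 2) * s t))
        = fun t => d1 F (t, t ^ (n + 1) * (t * s t)) := by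
      funext t
      rw [show t ^ (n + 2) * s t = t ^ (n + 1) * (t * s t) by ring]
    have eB : (fun t : ℝ => t ^ (n + 1) * σ t) = fun t => t ^ n * (t * σ t) := by
      funext t; ring
    rw [eA, ih (d1 F) (fun t => t * s t) (contDiff_d1 hF) (contDiff_id.mul hs),
      eB, lemP n (fun t => t * σ t) (contDiff_id.mul hσ)]
    simp

lemma lemL (n : ℕ) (F : ℝ × ℝ → ℝ) (c : ℝ) (hF : ContDiff ℝ (⊤ : ℕ∞) F) :
    iteratedDeriv (n + 1) (fun t => F (t, t ^ (n + 1) * c)) 0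
      = iteratedDeriv (n + 1) (fun t => F (t, 0)) 0
        + ((n + 1).factorial : ℝ) * c * d2 F (0, 0) := by
  have hw : ContDiff ℝ (⊤ : ℕ∞) (fun t : ℝ => t ^ (n + 1) * c) :=
    (contDiff_id.pow _).mul contDiff_const
  set σ : ℝ → ℝ := fun t => (((n : ℝ) + 1) * c) * d2 F (t, t ^ (n + 1) * c) with hσdef
  have hσ : ContDiff ℝ (⊤ : ℕ∞) σ :=
    contDiff_const.mul ((contDiff_d2 hF).comp (contDiff_id.prodMk hw))
  have e1 : deriv (fun t : ℝ => F (t, t ^ (n + 1) * c))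
      = fun t => d1 F (t, t ^ (n + 1) * c) + t ^ n * σ t := by
    rw [deriv_comp_pair hF (hw.differentiable (by norm_num))]
    funext t
    rw [deriv_pow_mul n (differentiable_const c)]
    simp only [hσdef, deriv_const']
    ring
  have e2 : deriv (fun t : ℝ => F (t, 0)) = fun t => d1 F (t, 0) := by
    rw [deriv_comp_pair hF (differentiable_const (0 : ℝ))]
    funext t
    simp
  have hA : ContDiff ℝ (⊤ : ℕ∞) (fun t : ℝ => d1 F (t, t ^ (n + 1) * c)) :=
    (contDiff_d1 hF).comp (contDiff_id.prodMk hw)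
  rw [iteratedDeriv_succ', iteratedDeriv_succ', e1, e2,
    iteratedDeriv_add'' hA
      (show ContDiff ℝ (⊤ : ℕ∞) (fun t : ℝ => t ^ n * σ t) from (contDiff_id.pow _).mul hσ) 0,
    lemZ n (d1 F) (fun _ => c) (contDiff_d1 hF) contDiff_const,
    lemP n σ hσ]
  simp only [hσdef]
  have : (0 : ℝ) ^ (n + 1) * c = 0 := by simp
  rw [this]
  rw [Nat.factorial_succ]
  push_cast
  ring

theorem stmt_8 (N : ℝ → ℝ) (hN : ContDiff ℝ (⊤ : ℕ∞) N) (j : ℕ) (V : ℕ → ℝ) :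
    adomian N (j + 1) V =
      adomian N (j + 1) (Function.update V (j + 1) 0) + V (j + 1) * deriv N (V 0) := by
  have hN' : ContDiff ℝ (⊤ : ℕ∞) N := hN.of_le (by simp)
  set Q : ℝ → ℝ := fun t => ∑ i ∈ Finset.range (j + 1), t ^ i * V i with hQdef
  have hQ : ContDiff ℝ (⊤ : ℕ∞) Q :=
    ContDiff.sum fun i _ => (contDiff_id.pow _).mul contDiff_const
  set F : ℝ × ℝ → ℝ := fun p => N (Q p.1 + p.2) with hFdef
  have hF : ContDiff ℝ (⊤ : ℕ∞) F :=
    hN'.comp ((hQ.comp contDiff_fst).add contDiff_snd)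
  have hQ0 : Q 0 = V 0 := by
    show ∑ i ∈ Finset.range (j + 1), (0 : ℝ) ^ i * V i = V 0
    rw [Finset.sum_eq_single_of_mem 0 (by simp)]
    · simp
    · intro i _ hi
      simp [zero_pow hi]
  have eL : (fun t : ℝ => F (t, t ^ (j + 1) * V (j + 1)))
      = fun t : ℝ => N (∑ i ∈ Finset.range (j + 1 + 1), t ^ i * V i) := by
    funext t
    rw [Finset.sum_range_succ]
  have eR : (fun t : ℝ => F (t, 0))
      = fun t : ℝ => N (∑ i ∈ Finset.range (j + 1 + 1),
          t ^ i * Function.update V (j + 1) 0 i) := by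
    funext t
    rw [Finset.sum_range_succ, Function.update_self]
    have : ∑ i ∈ Finset.range (j + 1), t ^ i * Function.update V (j + 1) 0 i = Q t := by
      apply Finset.sum_congr rfl
      intro i hi
      rw [Function.update_of_ne (by have := Finset.mem_range.mp hi; omega : i ≠ j + 1)]
    rw [this]
    simp [hFdef]
  -- compute d2 F (0,0)
  have hd2 : d2 F (0, 0) = deriv N (V 0) := by
    have hq : HasDerivAt Q (deriv Q 0) 0 :=
      ((hQ.differentiable (by norm_num)) 0).hasDerivAt
    have hqf : HasFDerivAt (fun p : ℝ × ℝ => Q p.1)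
        (deriv Q 0 • ContinuousLinearMap.fst ℝ ℝ ℝ) (0, 0) :=
      HasDerivAt.comp_hasFDerivAt (f := (Prod.fst : ℝ × ℝ → ℝ)) (f' := ContinuousLinearMap.fst ℝ ℝ ℝ) ((0 : ℝ), (0 : ℝ)) hq hasFDerivAt_fst
    have hg : HasFDerivAt (fun p : ℝ × ℝ => Q p.1 + p.2)
        (deriv Q 0 • ContinuousLinearMap.fst ℝ ℝ ℝ + ContinuousLinearMap.snd ℝ ℝ ℝ) (0, 0) :=
      hqf.add hasFDerivAt_snd
    have hNd : HasDerivAt N (deriv N (Q 0 + 0)) (Q 0 + 0) :=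
      ((hN'.differentiable (by norm_num)) _).hasDerivAt
    have hFd : HasFDerivAt F
        (deriv N (Q 0 + 0) • (deriv Q 0 • ContinuousLinearMap.fst ℝ ℝ ℝ
          + ContinuousLinearMap.snd ℝ ℝ ℝ)) (0, 0) :=
      hNd.comp_hasFDerivAt (0, 0) hg
    rw [d2, hFd.fderiv]
    simp [hQ0]
  have main := lemL j F (V (j + 1)) hF
  rw [eL, eR, hd2] at main
  have hfac : ((j + 1).factorial : ℝ) ≠ 0 := Nat.cast_ne_zero.mpr (Nat.factorial_ne_zero _)
  rw [adomian, adomian, main]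
  field_simp
end

section
/- Let N : ℝ → ℝ and Ñ : ℝ → ℝ be smooth with |N^{(p)}(u)| ≤ Ñ^{(p)}(|u|) for all u ∈ ℝ and all p ≥ 0, where each derivative Ñ^{(p)} is nonnegative and nondecreasing on [0,∞). Then for any reals u_0,...,u_k and v_0,...,v_k with |u_i|, |v_i| ≤ w_i, the Adomian polynomials satisfy |A_k(N; u_0,...,u_k)| ≤ A_k(Ñ; w_0, ..., w_k). -/
open Finset
open scoped ContDiff

lemma itd_add {f g : ℝ → ℝ} {n : ℕ} (hf : ContDiff ℝ n f) (hg : ContDiff ℝ n g) (x : ℝ) :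
    iteratedDeriv n (fun t => f t + g t) x = iteratedDeriv n f x + iteratedDeriv n g x := by
  have h := iteratedDerivWithin_add (Set.mem_univ x) uniqueDiffOn_univ
    (hf.contDiffOn (s := Set.univ) x (Set.mem_univ x)) (hg.contDiffOn (s := Set.univ) x (Set.mem_univ x))
  simpa [iteratedDerivWithin_univ, Pi.add_def] using h

lemma itd_cmul {f : ℝ → ℝ} {n : ℕ} (hf : ContDiff ℝ n f) (c x : ℝ) :
    iteratedDeriv n (fun t => c * f t) x = c * iteratedDeriv n f x := by
  have h := iteratedDerivWithin_const_mul (Set.mem_univ x) uniqueDiffOn_univ c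
    (hf.contDiffOn (s := Set.univ) x (Set.mem_univ x))
  simpa [iteratedDerivWithin_univ] using h

lemma itd_sum {ι : Type*} (s : Finset ι) (f : ι → ℝ → ℝ) {n : ℕ}
    (hf : ∀ i ∈ s, ContDiff ℝ n (f i)) (x : ℝ) :
    iteratedDeriv n (fun t => ∑ i ∈ s, f i t) x = ∑ i ∈ s, iteratedDeriv n (f i) x := by
  classical
  induction s using Finset.induction with
  | empty =>
    have : ∀ m : ℕ, iteratedDeriv m (fun _ : ℝ => (0:ℝ)) = fun _ => 0 := by
      intro m; induction m with
      | zero => funext t; simp [iteratedDeriv_zero]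
      | succ m ih => rw [iteratedDeriv_succ, ih]; funext t; simp
    simp [this n]
  | insert _ _ hi ih =>
    rename_i a s
    rw [Finset.sum_insert hi]
    have h1 : ContDiff ℝ n (f a) := hf a (mem_insert_self a s)
    have h2 : ContDiff ℝ n (fun t => ∑ i ∈ s, f i t) :=
      ContDiff.sum (fun i hi => hf i (mem_insert_of_mem hi))
    have : (fun t => ∑ i ∈ insert a s, f i t) = fun t => f a t + ∑ i ∈ s, f i t := by
      funext t; rw [Finset.sum_insert hi]
    rw [this, itd_add h1 h2, ih (fun i hi => hf i (mem_insert_of_mem hi))]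

lemma itd_monomial : ∀ (n : ℕ) (g : ℝ → ℝ), ContDiff ℝ ∞ g → ∀ m : ℕ,
    iteratedDeriv n (fun t : ℝ => t ^ m * g t) 0 =
      if m ≤ n then (n.choose m : ℝ) * (m.factorial : ℝ) * iteratedDeriv (n - m) g 0 else 0 := by
  intro n
  induction n with
  | zero =>
    intro g hg m
    match m with
    | 0 => simp [iteratedDeriv_zero]
    | m + 1 => simp [iteratedDeriv_zero]
  | succ n ih =>
    intro g hg m
    have hg' : ContDiff ℝ ∞ (deriv g) := (contDiff_infty_iff_deriv.mp hg).2
    have hder : deriv (fun t : ℝ => t ^ m * g t)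
        = fun t => (m : ℝ) * (t ^ (m - 1) * g t) + t ^ m * deriv g t := by
      funext t
      have h1 : HasDerivAt (fun x : ℝ => x ^ m) ((m : ℝ) * t ^ (m - 1)) t := hasDerivAt_pow m t
      have h2 : HasDerivAt g (deriv g t) t := (hg.differentiable (by norm_num) t).hasDerivAt
      rw [(h1.fun_mul h2).deriv]; ring
    have c1 : ContDiff ℝ (n : ℕ∞) (fun t : ℝ => (m : ℝ) * (t ^ (m - 1) * g t)) :=
      (contDiff_const.mul ((contDiff_id.pow _).mul (hg.of_le (by exact_mod_cast le_top))))
    have c2 : ContDiff ℝ (n : ℕ∞) (fun t : ℝ => t ^ m * deriv g t) :=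
      ((contDiff_id.pow _).mul (hg'.of_le (by exact_mod_cast le_top)))
    have c3 : ContDiff ℝ (n : ℕ∞) (fun t : ℝ => t ^ (m - 1) * g t) :=
      ((contDiff_id.pow _).mul (hg.of_le (by exact_mod_cast le_top)))
    rw [iteratedDeriv_succ', hder, itd_add c1 c2 0, itd_cmul c3 _ 0, ih g hg (m - 1),
      ih (deriv g) hg' m]
    match m with
    | 0 =>
      simp [iteratedDeriv_succ']
    | m + 1 =>
      simp only [Nat.add_sub_cancel]
      rcases lt_trichotomy m n with h | h | h
      · have h1 : m ≤ n := h.le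
        have h2 : m + 1 ≤ n := h
        have h3 : m + 1 ≤ n + 1 := by omega
        rw [if_pos h1, if_pos h2, if_pos h3]
        have e1 : n - m = (n - (m + 1)) + 1 := by omega
        have e2 : n + 1 - (m + 1) = (n - (m + 1)) + 1 := by omega
        rw [e1, e2, iteratedDeriv_succ']
        have hch : (n + 1).choose (m + 1) = n.choose m + n.choose (m + 1) :=
          Nat.choose_succ_succ n m
        have hfac : (m + 1).factorial = (m + 1) * m.factorial := Nat.factorial_succ m
        rw [hch, hfac]
        push_cast
        ring
      · subst h
        rw [if_pos (le_refl m), if_neg (by omega), if_pos (by omega : m + 1 ≤ m + 1)]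
        simp only [Nat.sub_self, Nat.add_sub_cancel_left, Nat.choose_self,
          Nat.choose_succ_self_right]
        rw [Nat.factorial_succ]
        push_cast
        ring
      · rw [if_neg (by omega), if_neg (by omega), if_neg (by omega)]
        ring

lemma adomian_main (k : ℕ) (u w : ℕ → ℝ) (hb : ∀ i, |u i| ≤ w i) :
    ∀ (n : ℕ) (f ftil : ℝ → ℝ), ContDiff ℝ ∞ f → ContDiff ℝ ∞ ftil →
      (∀ p x, |iteratedDeriv p f x| ≤ iteratedDeriv p ftil |x|) →
      (∀ p x, 0 ≤ x → 0 ≤ iteratedDeriv p ftil x) →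
      (∀ p, MonotoneOn (iteratedDeriv p ftil) (Set.Ici (0:ℝ))) →
      0 ≤ iteratedDeriv n (fun t : ℝ => ftil (∑ i ∈ range (k+1), t ^ i * w i)) 0 ∧
      |iteratedDeriv n (fun t : ℝ => f (∑ i ∈ range (k+1), t ^ i * u i)) 0| ≤
        iteratedDeriv n (fun t : ℝ => ftil (∑ i ∈ range (k+1), t ^ i * w i)) 0 := by
  have hw : ∀ i, 0 ≤ w i := fun i => (abs_nonneg _).trans (hb i)
  have hval : ∀ c : ℕ → ℝ, ∑ i ∈ range (k+1), (0:ℝ) ^ i * c i = c 0 := by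
    intro c
    rw [Finset.sum_eq_single 0]
    · simp
    · intro i _ hne; simp [zero_pow hne]
    · intro h; exact absurd (Finset.mem_range.mpr (Nat.succ_pos k)) h
  have hP : ∀ c : ℕ → ℝ, ContDiff ℝ ∞ (fun t : ℝ => ∑ i ∈ range (k+1), t ^ i * c i) :=
    fun c => ContDiff.sum (fun i _ => (contDiff_id.pow i).mul contDiff_const)
  -- derivative of the composition
  have key : ∀ (g : ℝ → ℝ), ContDiff ℝ ∞ g → ∀ c : ℕ → ℝ,
      deriv (fun t : ℝ => g (∑ i ∈ range (k+1), t ^ i * c i)) =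
      fun t : ℝ => ∑ i ∈ range (k+1),
        ((i : ℝ) * c i) * (t ^ (i - 1) * deriv g (∑ j ∈ range (k+1), t ^ j * c j)) := by
    intro g hg c
    funext t
    have hPd : HasDerivAt (fun t : ℝ => ∑ i ∈ range (k+1), t ^ i * c i)
        (∑ i ∈ range (k+1), ((i : ℝ) * t ^ (i - 1)) * c i) t :=
      HasDerivAt.fun_sum (fun i _ => (hasDerivAt_pow i t).mul_const (c i))
    have hgd : HasDerivAt g (deriv g (∑ i ∈ range (k+1), t ^ i * c i))
        (∑ i ∈ range (k+1), t ^ i * c i) :=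
      (hg.differentiable (by norm_num) _).hasDerivAt
    have hcomp : HasDerivAt (fun t : ℝ => g (∑ i ∈ range (k+1), t ^ i * c i))
        (deriv g (∑ i ∈ range (k+1), t ^ i * c i) *
          ∑ i ∈ range (k+1), ((i : ℝ) * t ^ (i - 1)) * c i) t := hgd.comp t hPd
    rw [hcomp.deriv, Finset.mul_sum]
    exact Finset.sum_congr rfl (fun i _ => by ring)
  -- iterated derivative of the composition at 0, one step of chain rule + Leibniz
  have hsum : ∀ (m : ℕ) (g : ℝ → ℝ), ContDiff ℝ ∞ g → ∀ c : ℕ → ℝ,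
      iteratedDeriv (m+1) (fun t : ℝ => g (∑ i ∈ range (k+1), t ^ i * c i)) 0 =
      ∑ i ∈ range (k+1), ((i : ℝ) * c i) *
        (if i - 1 ≤ m then ((m.choose (i-1) : ℝ) * ((i-1).factorial : ℝ)) *
            iteratedDeriv (m - (i-1))
              (fun t : ℝ => deriv g (∑ j ∈ range (k+1), t ^ j * c j)) 0
          else 0) := by
    intro m g hg c
    have hg' : ContDiff ℝ ∞ (deriv g) := (contDiff_infty_iff_deriv.mp hg).2
    have hgP' : ContDiff ℝ ∞ (fun t : ℝ => deriv g (∑ j ∈ range (k+1), t ^ j * c j)) :=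
      hg'.comp (hP c)
    have hsm : ∀ i ∈ range (k+1), ContDiff ℝ (m : ℕ∞) (fun t : ℝ =>
        ((i : ℝ) * c i) * (t ^ (i - 1) * deriv g (∑ j ∈ range (k+1), t ^ j * c j))) :=
      fun i _ => contDiff_const.mul ((contDiff_id.pow _).mul
        (hgP'.of_le (by exact_mod_cast le_top)))
    rw [iteratedDeriv_succ', key g hg c, itd_sum (range (k+1)) _ hsm 0]
    refine Finset.sum_congr rfl (fun i _ => ?_)
    have cc : ContDiff ℝ (m : ℕ∞) (fun t : ℝ =>
        t ^ (i - 1) * deriv g (∑ j ∈ range (k+1), t ^ j * c j)) :=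
      (contDiff_id.pow _).mul (hgP'.of_le (by exact_mod_cast le_top))
    rw [itd_cmul cc _ 0, itd_monomial m _ hgP' (i - 1)]
  -- main strong induction
  intro n
  induction n using Nat.strong_induction_on with
  | _ n IH =>
  intro f ftil hf hftil hmaj hnn hmono
  match n with
  | 0 =>
    simp only [iteratedDeriv_zero, hval]
    constructor
    · exact hnn 0 (w 0) (hw 0)
    · have h1 : |f (u 0)| ≤ ftil |u 0| := by simpa [iteratedDeriv_zero] using hmaj 0 (u 0)
      have h2 : ftil |u 0| ≤ ftil (w 0) := by
        have := hmono 0 (Set.mem_Ici.mpr (abs_nonneg (u 0))) (Set.mem_Ici.mpr (hw 0)) (hb 0)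
        simpa [iteratedDeriv_zero] using this
      exact h1.trans h2
  | m + 1 =>
    rw [hsum m f hf u, hsum m ftil hftil w]
    have hterm : ∀ i ∈ range (k+1),
        |((i : ℝ) * u i) * (if i - 1 ≤ m then ((m.choose (i-1) : ℝ) * ((i-1).factorial : ℝ)) *
            iteratedDeriv (m - (i-1))
              (fun t : ℝ => deriv f (∑ j ∈ range (k+1), t ^ j * u j)) 0 else 0)| ≤
        ((i : ℝ) * w i) * (if i - 1 ≤ m then ((m.choose (i-1) : ℝ) * ((i-1).factorial : ℝ)) *
            iteratedDeriv (m - (i-1))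
              (fun t : ℝ => deriv ftil (∑ j ∈ range (k+1), t ^ j * w j)) 0 else 0) ∧
        0 ≤ ((i : ℝ) * w i) * (if i - 1 ≤ m then ((m.choose (i-1) : ℝ) * ((i-1).factorial : ℝ)) *
            iteratedDeriv (m - (i-1))
              (fun t : ℝ => deriv ftil (∑ j ∈ range (k+1), t ^ j * w j)) 0 else 0) := by
      intro i _
      by_cases hcond : i - 1 ≤ m
      · rw [if_pos hcond, if_pos hcond]
        have hf' : ContDiff ℝ ∞ (deriv f) := (contDiff_infty_iff_deriv.mp hf).2
        have hftil' : ContDiff ℝ ∞ (deriv ftil) := (contDiff_infty_iff_deriv.mp hftil).2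
        have hmaj' : ∀ p x, |iteratedDeriv p (deriv f) x| ≤ iteratedDeriv p (deriv ftil) |x| := by
          intro p x
          have := hmaj (p+1) x
          rwa [iteratedDeriv_succ', iteratedDeriv_succ'] at this
        have hnn' : ∀ p x, 0 ≤ x → 0 ≤ iteratedDeriv p (deriv ftil) x := by
          intro p x hx
          have := hnn (p+1) x hx
          rwa [iteratedDeriv_succ'] at this
        have hmono' : ∀ p, MonotoneOn (iteratedDeriv p (deriv ftil)) (Set.Ici (0:ℝ)) := by
          intro p
          have := hmono (p+1)
          rwa [iteratedDeriv_succ'] at this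
        obtain ⟨hA, hB⟩ := IH (m - (i-1)) (by omega) (deriv f) (deriv ftil)
          hf' hftil' hmaj' hnn' hmono'
        have hC : (0:ℝ) ≤ (m.choose (i-1) : ℝ) * ((i-1).factorial : ℝ) := by positivity
        set A := iteratedDeriv (m - (i-1))
          (fun t : ℝ => deriv ftil (∑ j ∈ range (k+1), t ^ j * w j)) 0 with hAdef
        set B := iteratedDeriv (m - (i-1))
          (fun t : ℝ => deriv f (∑ j ∈ range (k+1), t ^ j * u j)) 0 with hBdef
        constructor
        · have e : |((i : ℝ) * u i) * (((m.choose (i-1) : ℝ) * ((i-1).factorial : ℝ)) * B)|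
              = ((i : ℝ) * |u i|) * (((m.choose (i-1) : ℝ) * ((i-1).factorial : ℝ)) * |B|) := by
            rw [abs_mul, abs_mul, abs_mul, abs_of_nonneg (Nat.cast_nonneg i), abs_of_nonneg hC]
          rw [e]
          have h1 : (i : ℝ) * |u i| ≤ (i : ℝ) * w i :=
            mul_le_mul_of_nonneg_left (hb i) (Nat.cast_nonneg i)
          have h2 : ((m.choose (i-1) : ℝ) * ((i-1).factorial : ℝ)) * |B|
              ≤ ((m.choose (i-1) : ℝ) * ((i-1).factorial : ℝ)) * A :=
            mul_le_mul_of_nonneg_left hB hC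
          exact mul_le_mul h1 h2 (mul_nonneg hC (abs_nonneg B))
            (mul_nonneg (Nat.cast_nonneg i) (hw i))
        · exact mul_nonneg (mul_nonneg (Nat.cast_nonneg i) (hw i)) (mul_nonneg hC hA)
      · rw [if_neg hcond, if_neg hcond]
        simp
    constructor
    · exact Finset.sum_nonneg (fun i hi => (hterm i hi).2)
    · exact le_trans (Finset.abs_sum_le_sum_abs _ _)
        (Finset.sum_le_sum (fun i hi => (hterm i hi).1))

theorem stmt_9 (N Ntil : ℝ → ℝ) (hN : ContDiff ℝ (⊤ : ℕ∞) N) (hNtil : ContDiff ℝ (⊤ : ℕ∞) Ntil)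
    (hmaj : ∀ (p : ℕ) (u : ℝ), |iteratedDeriv p N u| ≤ iteratedDeriv p Ntil |u|)
    (hnonneg : ∀ (p : ℕ) (w : ℝ), 0 ≤ w → 0 ≤ iteratedDeriv p Ntil w)
    (hmono : ∀ p : ℕ, MonotoneOn (iteratedDeriv p Ntil) (Set.Ici (0 : ℝ)))
    (k : ℕ) (u w : ℕ → ℝ) (hb : ∀ i : ℕ, |u i| ≤ w i) :
    |adomian N k u| ≤ adomian Ntil k w := by
  obtain ⟨-, h⟩ := adomian_main k u w hb k N Ntil (hN.of_le (by simp)) (hNtil.of_le (by simp))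
    hmaj hnonneg hmono
  unfold adomian
  rw [abs_mul, abs_of_nonneg (by positivity : (0:ℝ) ≤ 1 / (Nat.factorial k : ℝ))]
  exact mul_le_mul_of_nonneg_left h (by positivity)
end

section
/- Consider the scalar Cauchy problem u'(x) = N(x, u(x))·u(x) + φ(x) on [x0, ∞), u(x0) = u0, where N is continuous in x, locally Lipschitz in u, N(x,u) + u·∂N/∂u(x,u) < -α < 0 for all x, u, and |φ(x)| ≤ k for all x. Then the solution exists globally on [x0, ∞), is unique, and satisfies |u(x)| ≤ max(|u0|, k/α) for all x ≥ x0. -/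
/-!
Since `∂ᵤ(N(x,u)u) < -α`, the right-hand side `f(x,u) = N(x,u)u + φ(x)` is decreasing in `u`, and
`N(x,u)u < -αu` for `u > 0`. With `|φ| ≤ k ≤ αμ`, where `μ = max(|u₀|, k/α)`, this gives
`f(x,w) < 0` for `w > μ` and `f(x,w) > 0` for `w < -μ`, so no solution can leave `[-μ, μ]`.
On each `[x₀, b]` a solution of the equation with `u` clamped to a slightly larger interval exists
by Picard–Lindelöf, stays in `[-μ, μ]`, hence solves the original equation. Monotonicity of `f`
in `u` makes `(u - v)²` non-increasing for two solutions, which gives uniqueness and lets the local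
solutions be glued.
-/

open Set Filter Topology Function
open scoped NNReal

theorem LipschitzOnWith.add_const {α E : Type*} [PseudoEMetricSpace α] [SeminormedAddCommGroup E]
    {K : ℝ≥0} {f : α → E} {s : Set α} (hf : LipschitzOnWith K f s) (c : E) :
    LipschitzOnWith K (fun x => f x + c) s :=
  fun x hx y hy => by simpa only [edist_add_right] using hf hx hy

theorem LocallyLipschitz.exists_forall_lipschitzOnWith_comp_prodMk {X Y Z : Type*}
    [PseudoMetricSpace X] [PseudoMetricSpace Y] [PseudoMetricSpace Z] {G : X × Y → Z}
    (hG : LocallyLipschitz G) {s : Set X} {t : Set Y} (hs : IsCompact s) (ht : IsCompact t) :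
    ∃ K, ∀ x ∈ s, LipschitzOnWith K (G ∘ Prod.mk x) t := by
  obtain ⟨K, hK⟩ := hG.locallyLipschitzOn.exists_lipschitzOnWith_of_compact (hs.prod ht)
  exact ⟨K, fun x hx => mul_one K ▸
    hK.comp (LipschitzWith.prodMk_left x).lipschitzOnWith fun y hy => ⟨hx, hy⟩⟩

theorem exists_hasDerivWithinAt_Icc_projIcc {F : ℝ → ℝ → ℝ} {a b c d : ℝ} {K : ℝ≥0}
    (hab : a ≤ b) (hcd : c ≤ d)
    (hcont : ContinuousOn (uncurry F) (Icc a b ×ˢ Icc c d))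
    (hlip : ∀ x ∈ Icc a b, LipschitzOnWith K (F x) (Icc c d)) (w₀ : ℝ) :
    ∃ f : ℝ → ℝ, f a = w₀ ∧
      ∀ x ∈ Icc a b, HasDerivWithinAt f (F x (projIcc c d hcd (f x))) (Icc a b) x := by
  obtain ⟨C, hC⟩ := (isCompact_Icc.prod isCompact_Icc).exists_bound_of_continuousOn hcont
  have hproj : LipschitzWith 1 (fun w => (projIcc c d hcd w : ℝ)) :=
    mul_one (1 : ℝ≥0) ▸ (LipschitzWith.subtype_val _).comp (LipschitzWith.projIcc hcd)
  -- clamping makes the field globally Lipschitz and bounded, so the solution lives on all of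
  -- `[a, b]`
  have hPL : IsPicardLindelof (fun x w => F x (projIcc c d hcd w)) (tmin := a) (tmax := b)
      ⟨a, left_mem_Icc.2 hab⟩ w₀ (C.toNNReal * (b - a).toNNReal) 0 C.toNNReal K := by
    refine ⟨fun x hx => ?_, fun w _ => ?_, fun x hx w _ => ?_, ?_⟩
    · exact mul_one K ▸ (hlip x hx).comp hproj.lipschitzOnWith fun w _ => Subtype.prop _
    · exact hcont.comp (continuousOn_id.prodMk continuousOn_const)
        (fun x hx => ⟨hx, Subtype.prop _⟩)
    · exact (hC (x, _) ⟨hx, Subtype.prop _⟩).trans (Real.le_coe_toNNReal _)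
    · simp [sub_nonneg.2 hab]
  exact hPL.exists_eq_forall_mem_Icc_hasDerivWithinAt₀

theorem le_of_hasDerivWithinAt_Icc_of_neg_of_lt {f f' : ℝ → ℝ} {a b μ : ℝ}
    (hf : ∀ x ∈ Icc a b, HasDerivWithinAt f (f' x) (Icc a b) x) (ha : f a ≤ μ)
    (hneg : ∀ x ∈ Ico a b, μ < f x → f' x < 0) :
    ∀ x ∈ Icc a b, f x ≤ μ := by
  intro x hx
  refine le_of_forall_gt_imp_ge_of_dense fun μ' hμ' => ?_
  -- the fencing lemma needs a strict inequality at the barrier, hence the levels `μ' > μ`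
  refine image_le_of_deriv_right_lt_deriv_boundary' (B := fun _ => μ') (B' := 0)
    (fun y hy => (hf y hy).continuousWithinAt)
    (fun y hy => (hf y (Ico_subset_Icc_self hy)).mono_of_mem_nhdsWithin
      (Icc_mem_nhdsGE_of_mem hy))
    (ha.trans hμ'.le) continuousOn_const (fun y _ => hasDerivWithinAt_const _ _ _)
    (fun y hy hfy => hneg y hy (hfy ▸ hμ')) hx

theorem abs_le_of_hasDerivWithinAt_Icc {f f' : ℝ → ℝ} {a b μ : ℝ}
    (hf : ∀ x ∈ Icc a b, HasDerivWithinAt f (f' x) (Icc a b) x) (ha : |f a| ≤ μ)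
    (hneg : ∀ x ∈ Ico a b, μ < f x → f' x < 0) (hpos : ∀ x ∈ Ico a b, f x < -μ → 0 < f' x) :
    ∀ x ∈ Icc a b, |f x| ≤ μ := by
  have hup := le_of_hasDerivWithinAt_Icc_of_neg_of_lt hf (le_of_abs_le ha) hneg
  have hlow := le_of_hasDerivWithinAt_Icc_of_neg_of_lt (f := -f) (f' := -f')
    (fun x hx => (hf x hx).neg) ((neg_le_abs _).trans ha)
    (fun x hx h => neg_neg_of_pos (hpos x hx (lt_neg_of_lt_neg h)))
  exact fun x hx => abs_le.2 ⟨neg_le.1 (hlow x hx), hup x hx⟩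

theorem Antitone.sub_mul_sub_nonpos {g : ℝ → ℝ} (hg : Antitone g) (p q : ℝ) :
    (g p - g q) * (p - q) ≤ 0 := by
  rcases le_total p q with h | h
  · exact mul_nonpos_of_nonneg_of_nonpos (sub_nonneg.2 (hg h)) (sub_nonpos.2 h)
  · exact mul_nonpos_of_nonpos_of_nonneg (sub_nonpos.2 (hg h)) (sub_nonneg.2 h)

theorem eqOn_Icc_of_hasDerivWithinAt_of_antitone {F : ℝ → ℝ → ℝ} {a b : ℝ}
    (hF : ∀ x ∈ Ioo a b, Antitone (F x)) {u v : ℝ → ℝ}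
    (hu : ∀ x ∈ Icc a b, HasDerivWithinAt u (F x (u x)) (Icc a b) x)
    (hv : ∀ x ∈ Icc a b, HasDerivWithinAt v (F x (v x)) (Icc a b) x) (h₀ : u a = v a) :
    EqOn u v (Icc a b) := by
  have hsq : AntitoneOn (fun x => (u x - v x) ^ 2) (Icc a b) := by
    refine antitoneOn_of_hasDerivWithinAt_nonpos (convex_Icc a b)
      (f' := fun x => 2 * ((F x (u x) - F x (v x)) * (u x - v x)))
      (fun x hx => ((hu x hx).continuousWithinAt.sub (hv x hx).continuousWithinAt).pow 2)
      (fun x hx => ?_) (fun x hx => ?_)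
    · rw [interior_Icc] at hx ⊢
      refine ((((hu x (Ioo_subset_Icc_self hx)).sub
        (hv x (Ioo_subset_Icc_self hx))).fun_pow 2).mono Ioo_subset_Icc_self).congr_deriv ?_
      simp only [Pi.sub_apply, Nat.cast_ofNat]
      ring
    · rw [interior_Icc] at hx
      linarith [(hF x hx).sub_mul_sub_nonpos (u x) (v x)]
  intro x hx
  have h : (u x - v x) ^ 2 ≤ (u a - v a) ^ 2 := hsq (left_mem_Icc.2 (hx.1.trans hx.2)) hx hx.1
  rw [h₀, sub_self] at h
  nlinarith [sq_nonneg (u x - v x)]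

theorem exists_hasDerivWithinAt_Icc_abs_le {F : ℝ → ℝ → ℝ} {a b μ R w₀ : ℝ} {K : ℝ≥0}
    (hab : a ≤ b) (hμR : μ < R) (hcont : ContinuousOn (uncurry F) (Icc a b ×ˢ Icc (-R) R))
    (hlip : ∀ x ∈ Icc a b, LipschitzOnWith K (F x) (Icc (-R) R))
    (hneg : ∀ x ∈ Icc a b, ∀ w, μ < w → F x w < 0) (hpos : ∀ x ∈ Icc a b, ∀ w, w < -μ → 0 < F x w)
    (hw₀ : |w₀| ≤ μ) :
    ∃ f : ℝ → ℝ, f a = w₀ ∧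
      ∀ x ∈ Icc a b, HasDerivWithinAt f (F x (f x)) (Icc a b) x ∧ |f x| ≤ μ := by
  have hR : -R ≤ R := by linarith [(abs_nonneg w₀).trans hw₀]
  obtain ⟨f, hf₀, hf⟩ := exists_hasDerivWithinAt_Icc_projIcc hab hR hcont hlip w₀
  have hbound : ∀ x ∈ Icc a b, |f x| ≤ μ := by
    refine abs_le_of_hasDerivWithinAt_Icc hf (hf₀ ▸ hw₀) (fun x hx hfx => hneg x
      (Ico_subset_Icc_self hx) _ ?_) (fun x hx hfx => hpos x (Ico_subset_Icc_self hx) _ ?_)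
    · exact lt_max_of_lt_right (lt_min hμR hfx)
    · exact max_lt (by linarith) (min_lt_of_right_lt hfx)
  refine ⟨f, hf₀, fun x hx => ⟨?_, hbound x hx⟩⟩
  have hfx : f x ∈ Icc (-R) R := abs_le.1 ((hbound x hx).trans hμR.le)
  simpa only [projIcc_of_mem hR hfx] using hf x hx

theorem eqOn_Ici_of_hasDerivWithinAt_of_antitone {F : ℝ → ℝ → ℝ} {a : ℝ}
    (hF : ∀ x ∈ Ioi a, Antitone (F x)) {u v : ℝ → ℝ}
    (hu : ∀ x ∈ Ici a, HasDerivWithinAt u (F x (u x)) (Ici a) x)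
    (hv : ∀ x ∈ Ici a, HasDerivWithinAt v (F x (v x)) (Ici a) x) (h₀ : u a = v a) :
    EqOn u v (Ici a) := fun _ hx =>
  eqOn_Icc_of_hasDerivWithinAt_of_antitone (fun y hy => hF y hy.1)
    (fun y hy => (hu y hy.1).mono Icc_subset_Ici_self)
    (fun y hy => (hv y hy.1).mono Icc_subset_Ici_self) h₀ (right_mem_Icc.2 hx)

theorem exists_hasDerivWithinAt_Ici_of_Icc {F : ℝ → ℝ → ℝ} {a w₀ : ℝ} {p : ℝ → Prop}
    (hF : ∀ x ∈ Ioi a, Antitone (F x))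
    (hloc : ∀ b, a ≤ b → ∃ f : ℝ → ℝ, f a = w₀ ∧
      ∀ x ∈ Icc a b, HasDerivWithinAt f (F x (f x)) (Icc a b) x ∧ p (f x)) :
    ∃ u : ℝ → ℝ, u a = w₀ ∧
      ∀ x ∈ Ici a, HasDerivWithinAt u (F x (u x)) (Ici a) x ∧ p (u x) := by
  choose S hS₀ hS using fun b : Ici a => hloc b b.2
  have hagree : ∀ b c : Ici a, b ≤ c → EqOn (S b) (S c) (Icc a b) :=
    fun b c (hbc : (b : ℝ) ≤ c) =>
    eqOn_Icc_of_hasDerivWithinAt_of_antitone (fun x hx => hF x hx.1) (fun x hx => (hS b x hx).1)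
      (fun x hx => (hS c x (Icc_subset_Icc_right hbc hx)).1.mono (Icc_subset_Icc_right hbc))
      ((hS₀ b).trans (hS₀ c).symm)
  -- the value at `x` is read off the solution on `[a, x]`
  set u : ℝ → ℝ := fun x => S (projIci a x) x
  have hu : ∀ b : Ici a, EqOn u (S b) (Icc a b) := fun b y hy => by
    simp only [u, projIci_of_mem (mem_Ici.2 hy.1)]
    exact hagree ⟨y, hy.1⟩ b hy.2 (right_mem_Icc.2 hy.1)
  refine ⟨u, (hu ⟨a, mem_Ici.2 le_rfl⟩ (left_mem_Icc.2 le_rfl)).trans (hS₀ _), fun x hx => ?_⟩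
  set b : Ici a := ⟨x + 1, mem_Ici.2 ((mem_Ici.1 hx).trans (lt_add_one x).le)⟩
  have hxb : x ∈ Icc a b := ⟨hx, (lt_add_one x).le⟩
  obtain ⟨hd, hp⟩ := hS b x hxb
  rw [hu b hxb]
  refine ⟨(hd.congr (hu b) (hu b hxb)).mono_of_mem_nhdsWithin ?_, hp⟩
  simpa only [Ici_inter_Iic] using inter_mem_nhdsWithin (Ici a) (Iic_mem_nhds (lt_add_one x))

theorem strictAnti_mul_self_add_mul {g g' : ℝ → ℝ} {α : ℝ} (hg : ∀ w, HasDerivAt g (g' w) w)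
    (hlt : ∀ w, g w + w * g' w < -α) : StrictAnti fun w => g w * w + α * w :=
  strictAnti_of_hasDerivAt_neg
    (fun w => ((hg w).mul (hasDerivAt_id w)).add ((hasDerivAt_id w).const_mul α))
    (fun w => by simp only [id, mul_one]; linarith [hlt w])

theorem antitone_mul_self {g g' : ℝ → ℝ} {α : ℝ} (hα : 0 ≤ α) (hg : ∀ w, HasDerivAt g (g' w) w)
    (hlt : ∀ w, g w + w * g' w < -α) : Antitone fun w => g w * w :=
  (strictAnti_of_hasDerivAt_neg (fun w => (hg w).mul (hasDerivAt_id w))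
    (fun w => by simp only [id, mul_one]; linarith [hlt w])).antitone

theorem mul_self_add_neg {g g' : ℝ → ℝ} {α μ c w : ℝ} (hα : 0 < α)
    (hg : ∀ w, HasDerivAt g (g' w) w) (hlt : ∀ w, g w + w * g' w < -α)
    (hμ : 0 ≤ μ) (hc : c ≤ α * μ) (hw : μ < w) : g w * w + c < 0 := by
  have h := strictAnti_mul_self_add_mul hg hlt (hμ.trans_lt hw)
  simp only [mul_zero, add_zero] at h
  nlinarith

theorem mul_self_add_pos {g g' : ℝ → ℝ} {α μ c w : ℝ} (hα : 0 < α)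
    (hg : ∀ w, HasDerivAt g (g' w) w) (hlt : ∀ w, g w + w * g' w < -α)
    (hμ : 0 ≤ μ) (hc : -(α * μ) ≤ c) (hw : w < -μ) : 0 < g w * w + c := by
  have h := strictAnti_mul_self_add_mul hg hlt (hw.trans_le (neg_nonpos.2 hμ))
  simp only [mul_zero, add_zero] at h
  nlinarith

theorem stmt_15_general (x0 u0 α k : ℝ) (hα : 0 < α)
    (N N' : ℝ → ℝ → ℝ) (φ : ℝ → ℝ)
    (hNlip : LocallyLipschitz (fun p : ℝ × ℝ => N p.1 p.2))
    (hderiv : ∀ x ∈ Set.Ici x0, ∀ u : ℝ, HasDerivAt (fun v => N x v) (N' x u) u)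
    (hdissip : ∀ x ∈ Set.Ici x0, ∀ u : ℝ, N x u + u * N' x u < -α)
    (hφcont : ContinuousOn φ (Set.Ici x0))
    (hφ : ∀ x ∈ Set.Ici x0, |φ x| ≤ k) :
    ∃ u : ℝ → ℝ,
      (u x0 = u0 ∧
        (∀ x ∈ Set.Ici x0, HasDerivWithinAt u (N x (u x) * u x + φ x) (Set.Ici x0) x) ∧
        (∀ x ∈ Set.Ici x0, |u x| ≤ max |u0| (k / α))) ∧
      ∀ v : ℝ → ℝ, v x0 = u0 →
        (∀ x ∈ Set.Ici x0, HasDerivWithinAt v (N x (v x) * v x + φ x) (Set.Ici x0) x) →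
        Set.EqOn v u (Set.Ici x0) := by
  set μ := max |u0| (k / α)
  have hμ : 0 ≤ μ := (abs_nonneg u0).trans (le_max_left _ _)
  have hkμ : k ≤ α * μ := (div_le_iff₀' hα).1 (le_max_right _ _)
  have hanti : ∀ x ∈ Ioi x0, Antitone fun w => N x w * w + φ x := fun x hx _ _ h =>
    have hx' : x ∈ Ici x0 := Ioi_subset_Ici_self hx
    add_le_add_left (antitone_mul_self hα.le (hderiv x hx') (hdissip x hx') h) _
  have hG : LocallyLipschitz fun p : ℝ × ℝ => N p.1 p.2 * p.2 :=
    (contDiff_mul (𝕜 := ℝ)).locallyLipschitz.comp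
      (hNlip.prodMk LipschitzWith.prod_snd.locallyLipschitz)
  obtain ⟨u, hu₀, hu⟩ := exists_hasDerivWithinAt_Ici_of_Icc (p := fun w => |w| ≤ μ) hanti
    fun b hb => by
      obtain ⟨K, hK⟩ := hG.exists_forall_lipschitzOnWith_comp_prodMk (isCompact_Icc (a := x0)
        (b := b)) (isCompact_Icc (a := -(μ + 1)) (b := μ + 1))
      refine exists_hasDerivWithinAt_Icc_abs_le hb (lt_add_one μ) ?_
        (fun x hx => (hK x hx).add_const (φ x))
        (fun x hx w hw => mul_self_add_neg hα (hderiv x hx.1) (hdissip x hx.1) hμ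
          ((le_abs_self _).trans ((hφ x hx.1).trans hkμ)) hw)
        (fun x hx w hw => mul_self_add_pos hα (hderiv x hx.1) (hdissip x hx.1) hμ
          (neg_le.1 ((neg_le_abs _).trans ((hφ x hx.1).trans hkμ))) hw)
        (le_max_left _ _)
      exact hG.continuous.continuousOn.add
        ((hφcont.mono Icc_subset_Ici_self).comp continuousOn_fst fun p hp => hp.1)
  refine ⟨u, ⟨hu₀, fun x hx => (hu x hx).1, fun x hx => (hu x hx).2⟩, fun v hv₀ hv => ?_⟩
  exact eqOn_Ici_of_hasDerivWithinAt_of_antitone hanti hv (fun x hx => (hu x hx).1)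
    (hv₀.trans hu₀.symm)

theorem stmt_15 (x0 u0 α k : ℝ) (hα : 0 < α) (hk : 0 ≤ k)
    (N N' : ℝ → ℝ → ℝ) (φ : ℝ → ℝ)
    (hNcont : ∀ u : ℝ, ContinuousOn (fun x => N x u) (Set.Ici x0))
    (hNlip : LocallyLipschitz (fun p : ℝ × ℝ => N p.1 p.2))
    (hderiv : ∀ x ∈ Set.Ici x0, ∀ u : ℝ, HasDerivAt (fun v => N x v) (N' x u) u)
    (hdissip : ∀ x ∈ Set.Ici x0, ∀ u : ℝ, N x u + u * N' x u < -α)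
    (hφcont : ContinuousOn φ (Set.Ici x0))
    (hφ : ∀ x ∈ Set.Ici x0, |φ x| ≤ k) :
    ∃ u : ℝ → ℝ,
      (u x0 = u0 ∧
        (∀ x ∈ Set.Ici x0, HasDerivWithinAt u (N x (u x) * u x + φ x) (Set.Ici x0) x) ∧
        (∀ x ∈ Set.Ici x0, |u x| ≤ max |u0| (k / α))) ∧
      ∀ v : ℝ → ℝ, v x0 = u0 →
        (∀ x ∈ Set.Ici x0, HasDerivWithinAt v (N x (v x) * v x + φ x) (Set.Ici x0) x) →
        Set.EqOn v u (Set.Ici x0) :=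
  stmt_15_general x0 u0 α k hα N N' φ hNlip hderiv hdissip hφcont hφ
end
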